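/- arXiv:2108.10535 — 8 statements merged into one kernel-verified Lean document; each statement's English description precedes it below -/
import Mathlib

section
/- (Theorem 1: feasibility of pure strategy Nash equilibria.) Consider the joint sensing and communication game with common utility U(A) = f(A) + η·∑_{i∈ι} Φ_i(A). Assume (i) f(A) − f(B) < η for all strategy profiles A, B, and (ii) for every profile A and every player m with Φ_m(A) = −1 there exists a' ∈ 𝒜 m such that the deviation A' = A[m ↦ a'] satisfies Φ_m(A') = 0 and Φ_j(A') = Φ_j(A) for all j ≠ m (each vehicle can shrink its radar detection duration to repair its own constraint without affecting other vehicles). Then every pure strategy Nash equilibrium of the game is feasible, i.e., satisfies Φ_i(A*) = 0 for all players i. -/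
/-- Theorem 1: feasibility of pure strategy Nash equilibria.
With `U(A) = f(A) + η·∑ i, Φ i A`, assume (i) `f(A) − f(B) < η` for all profiles, and
(ii) every player with a violated constraint can unilaterally repair it without affecting
the other players' penalties. Then every pure strategy Nash equilibrium is feasible. -/
theorem stmt_2
    {ι : Type*} [Fintype ι] [Nonempty ι] [DecidableEq ι]
    {𝒜 : ι → Type*} [∀ m, Fintype (𝒜 m)] [∀ m, Nonempty (𝒜 m)]
    (f : (∀ m, 𝒜 m) → ℝ) (η : ℝ) (Φ : ι → (∀ m, 𝒜 m) → ℝ)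
    (hΦ : ∀ i A, Φ i A = -1 ∨ Φ i A = 0)
    (U : (∀ m, 𝒜 m) → ℝ)
    (hU : ∀ A, U A = f A + η * ∑ i, Φ i A)
    (hf : ∀ A B, f A - f B < η)
    (hrepair : ∀ (A : ∀ m, 𝒜 m) (m : ι), Φ m A = -1 →
      ∃ a' : 𝒜 m, Φ m (Function.update A m a') = 0 ∧
        ∀ j, j ≠ m → Φ j (Function.update A m a') = Φ j A)
    (Astar : ∀ m, 𝒜 m)
    (hNE : ∀ (m : ι) (a : 𝒜 m), U (Function.update Astar m a) ≤ U Astar) :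
    ∀ i, Φ i Astar = 0 := by
  intro m
  rcases hΦ m Astar with hm | hm
  · exfalso
    obtain ⟨a', ha0, haj⟩ := hrepair Astar m hm
    set A' := Function.update Astar m a' with hA'
    have hsum : ∑ i, Φ i A' = (∑ i, Φ i Astar) + 1 := by
      rw [← Finset.sum_erase_add _ _ (Finset.mem_univ m),
          ← Finset.sum_erase_add _ (Φ · Astar) (Finset.mem_univ m)]
      rw [Finset.sum_congr rfl (fun j hj => haj j (Finset.ne_of_mem_erase hj)),
          ha0, hm]
      ring
    have h := hNE m a'
    rw [hU, hU, hsum] at h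
    have h2 : η ≤ f Astar - f A' := by nlinarith
    exact absurd (hf Astar A') (not_lt.mpr h2)
  · exact hm
end

section
/- Every finite exact potential game possesses at least one pure strategy Nash equilibrium; more precisely, if P is an exact potential function for the game, then any strategy profile A* that maximizes P over all strategy profiles (such a maximizer exists since the profile space is finite and nonempty) is a pure strategy Nash equilibrium. -/
/-- Every finite exact potential game possesses at least one pure strategy
Nash equilibrium; more precisely, if `P` is an exact potential, then any profile
maximizing `P` (such a maximizer exists by finiteness) is a pure strategy Nash
equilibrium. -/
theorem stmt_3
    {ι : Type*} [Fintype ι] [Nonempty ι] [DecidableEq ι]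
    {𝒜 : ι → Type*} [∀ m, Fintype (𝒜 m)] [∀ m, Nonempty (𝒜 m)]
    (U : ι → (∀ m, 𝒜 m) → ℝ)
    (P : (∀ m, 𝒜 m) → ℝ)
    (hP : ∀ (A : ∀ m, 𝒜 m) (m : ι) (a : 𝒜 m),
      U m (Function.update A m a) - U m A = P (Function.update A m a) - P A) :
    (∃ Astar : ∀ m, 𝒜 m,
      ∀ (m : ι) (a : 𝒜 m), U m (Function.update Astar m a) ≤ U m Astar) ∧
    (∀ Astar : ∀ m, 𝒜 m, (∀ A : ∀ m, 𝒜 m, P A ≤ P Astar) →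
      ∀ (m : ι) (a : 𝒜 m), U m (Function.update Astar m a) ≤ U m Astar) := by
  have key : ∀ Astar : ∀ m, 𝒜 m, (∀ A : ∀ m, 𝒜 m, P A ≤ P Astar) →
      ∀ (m : ι) (a : 𝒜 m), U m (Function.update Astar m a) ≤ U m Astar := by
    intro Astar hmax m a
    have h := hP Astar m a
    have := hmax (Function.update Astar m a)
    linarith
  obtain ⟨Astar, hmax⟩ := Finite.exists_max P
  exact ⟨⟨Astar, key Astar fun A => hmax A⟩, key⟩
end

section
/- Consider the joint sensing and communication game with common utility U(A) = f(A) + η·∑_{i∈ι} Φ_i(A). Assume 0 ≤ f(A) < η for every strategy profile A, and assume that at least one feasible profile exists. Then every profile A* that maximizes U over all strategy profiles also maximizes the radar total mutual information f over the set of feasible profiles: f(A*) ≥ f(B) for every feasible profile B. -/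
/-- With `U(A) = f(A) + η·∑ i, Φ i A`, `0 ≤ f(A) < η` for every profile,
and at least one feasible profile, every profile `A*` maximizing `U` over all profiles
also maximizes the radar total mutual information `f` over the feasible profiles:
`f(A*) ≥ f(B)` for every feasible `B`. -/
theorem stmt_5
    {ι : Type*} [Fintype ι] [Nonempty ι]
    {𝒜 : ι → Type*} [∀ m, Fintype (𝒜 m)] [∀ m, Nonempty (𝒜 m)]
    (f : (∀ m, 𝒜 m) → ℝ) (η : ℝ) (Φ : ι → (∀ m, 𝒜 m) → ℝ)
    (hΦ : ∀ i A, Φ i A = -1 ∨ Φ i A = 0)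
    (U : (∀ m, 𝒜 m) → ℝ)
    (hU : ∀ A, U A = f A + η * ∑ i, Φ i A)
    (hf : ∀ A, 0 ≤ f A ∧ f A < η)
    (hfeas : ∃ B : ∀ m, 𝒜 m, ∀ i, Φ i B = 0)
    (Astar : ∀ m, 𝒜 m)
    (hmax : ∀ A : ∀ m, 𝒜 m, U A ≤ U Astar) :
    ∀ B : ∀ m, 𝒜 m, (∀ i, Φ i B = 0) → f B ≤ f Astar := by
  classical
  obtain ⟨B0, hB0⟩ := hfeas
  have hη : 0 < η := lt_of_le_of_lt (hf B0).1 (hf B0).2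
  -- Astar is feasible
  have hAfeas : ∀ i, Φ i Astar = 0 := by
    by_contra h
    push_neg at h
    obtain ⟨j, hj⟩ := h
    have hsum : ∑ i, Φ i Astar ≤ -1 := by
      have hj' : Φ j Astar = -1 := (hΦ j Astar).resolve_right hj
      calc ∑ i, Φ i Astar ≤ ∑ i, (if i = j then (-1 : ℝ) else 0) := by
            apply Finset.sum_le_sum
            intro i _
            by_cases hij : i = j
            · simp [hij, hj']
            · simp [hij]
              rcases hΦ i Astar with h' | h' <;> simp [h']
        _ = -1 := by simp
    have h1 : U Astar ≤ f Astar - η := by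
      rw [hU]
      have : η * ∑ i, Φ i Astar ≤ η * (-1) := by
        exact mul_le_mul_of_nonneg_left hsum hη.le
      linarith
    have h2 : U B0 = f B0 := by
      rw [hU]
      simp [hB0]
    have := hmax B0
    have := (hf Astar).2
    have := (hf B0).1
    linarith
  intro B hB
  have hUB : U B = f B := by rw [hU]; simp [hB]
  have hUA : U Astar = f Astar := by rw [hU]; simp [hAfeas]
  have := hmax B
  linarith
end

section
/- (Theorem 2: existence of a feasible pure strategy Nash equilibrium.) Consider the joint sensing and communication game with common utility U(A) = f(A) + η·∑_{i∈ι} Φ_i(A). Assume 0 ≤ f(A) < η for every strategy profile A, and assume that at least one feasible profile exists. Then the game has at least one pure strategy Nash equilibrium that is feasible; in particular, any profile A* maximizing U over the (finite, nonempty) set of all profiles is a feasible pure strategy Nash equilibrium which maximizes f over all feasible profiles. -/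
/-- Theorem 2: existence of a feasible pure strategy Nash equilibrium.
With `U(A) = f(A) + η·∑ i, Φ i A`, `0 ≤ f(A) < η` for every profile, and at least one
feasible profile, the game has a feasible pure strategy Nash equilibrium; in particular
any profile `A*` maximizing `U` over all profiles is a feasible pure strategy Nash
equilibrium which maximizes `f` over all feasible profiles. -/
theorem stmt_6
    {ι : Type*} [Fintype ι] [Nonempty ι] [DecidableEq ι]
    {𝒜 : ι → Type*} [∀ m, Fintype (𝒜 m)] [∀ m, Nonempty (𝒜 m)]
    (f : (∀ m, 𝒜 m) → ℝ) (η : ℝ) (Φ : ι → (∀ m, 𝒜 m) → ℝ)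
    (hΦ : ∀ i A, Φ i A = -1 ∨ Φ i A = 0)
    (U : (∀ m, 𝒜 m) → ℝ)
    (hU : ∀ A, U A = f A + η * ∑ i, Φ i A)
    (hf : ∀ A, 0 ≤ f A ∧ f A < η)
    (hfeas : ∃ B : ∀ m, 𝒜 m, ∀ i, Φ i B = 0) :
    (∃ Astar : ∀ m, 𝒜 m, (∀ i, Φ i Astar = 0) ∧
      (∀ (m : ι) (a : 𝒜 m), U (Function.update Astar m a) ≤ U Astar)) ∧
    (∀ Astar : ∀ m, 𝒜 m, (∀ A : ∀ m, 𝒜 m, U A ≤ U Astar) →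
      (∀ i, Φ i Astar = 0) ∧
      (∀ (m : ι) (a : 𝒜 m), U (Function.update Astar m a) ≤ U Astar) ∧
      (∀ B : ∀ m, 𝒜 m, (∀ i, Φ i B = 0) → f B ≤ f Astar)) := by
  obtain ⟨B, hB⟩ := hfeas
  have hηpos : 0 < η := lt_of_le_of_lt (hf B).1 (hf B).2
  have hUB : U B = f B := by simp [hU B, hB]
  have main : ∀ Astar : ∀ m, 𝒜 m, (∀ A : ∀ m, 𝒜 m, U A ≤ U Astar) →
      (∀ i, Φ i Astar = 0) ∧
      (∀ (m : ι) (a : 𝒜 m), U (Function.update Astar m a) ≤ U Astar) ∧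
      (∀ B' : ∀ m, 𝒜 m, (∀ i, Φ i B' = 0) → f B' ≤ f Astar) := by
    intro A h
    have hfeasA : ∀ i, Φ i A = 0 := by
      by_contra hc
      push_neg at hc
      obtain ⟨j, hj⟩ := hc
      have hjm : Φ j A = -1 := (hΦ j A).resolve_right hj
      have hsum : ∑ i, Φ i A ≤ -1 := by
        have h1 : ∑ i, Φ i A = Φ j A + ∑ i ∈ Finset.univ.erase j, Φ i A :=
          (Finset.add_sum_erase _ _ (Finset.mem_univ j)).symm
        have h2 : ∑ i ∈ Finset.univ.erase j, Φ i A ≤ 0 :=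
          Finset.sum_nonpos (fun i _ => by rcases hΦ i A with h' | h' <;> simp [h'])
        rw [h1, hjm]; linarith
      have hUA : U A < 0 := by
        have : η * ∑ i, Φ i A ≤ η * (-1) :=
          mul_le_mul_of_nonneg_left hsum hηpos.le
        have hfA := hf A
        rw [hU A]; linarith
      have : U B ≤ U A := h B
      have : 0 ≤ f B := (hf B).1
      linarith [hUB]
    refine ⟨hfeasA, fun m a => h _, fun B' hB' => ?_⟩
    have hUB' : U B' = f B' := by simp [hU B', hB']
    have hUA : U A = f A := by simp [hU A, hfeasA]
    linarith [h B']
  refine ⟨?_, main⟩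
  obtain ⟨Astar, hmax⟩ := Finite.exists_max U
  exact ⟨Astar, (main Astar hmax).1, (main Astar hmax).2.1⟩
end

section
/- (Equivalence of penalized and constrained optimization.) Consider the joint sensing and communication game with common utility U(A) = f(A) + η·∑_{i∈ι} Φ_i(A). Assume 0 ≤ f(A) < η for every strategy profile A, and assume that at least one feasible profile exists. Then a profile A* maximizes U over all strategy profiles if and only if A* is feasible and f(A*) ≥ f(B) for every feasible profile B; i.e., the unconstrained maximization of the penalized utility U is equivalent to the maximization of the radar total mutual information f subject to the feasibility constraints. -/
/-- Equivalence of penalized and constrained optimization.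
With `U(A) = f(A) + η·∑ i, Φ i A`, `0 ≤ f(A) < η` for every profile, and at least one
feasible profile, a profile `A*` maximizes `U` over all profiles if and only if `A*` is
feasible and `f(A*) ≥ f(B)` for every feasible profile `B`. -/
theorem stmt_7
    {ι : Type*} [Fintype ι] [Nonempty ι]
    {𝒜 : ι → Type*} [∀ m, Fintype (𝒜 m)] [∀ m, Nonempty (𝒜 m)]
    (f : (∀ m, 𝒜 m) → ℝ) (η : ℝ) (Φ : ι → (∀ m, 𝒜 m) → ℝ)
    (hΦ : ∀ i A, Φ i A = -1 ∨ Φ i A = 0)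
    (U : (∀ m, 𝒜 m) → ℝ)
    (hU : ∀ A, U A = f A + η * ∑ i, Φ i A)
    (hf : ∀ A, 0 ≤ f A ∧ f A < η)
    (hfeas : ∃ B : ∀ m, 𝒜 m, ∀ i, Φ i B = 0)
    (Astar : ∀ m, 𝒜 m) :
    (∀ A : ∀ m, 𝒜 m, U A ≤ U Astar) ↔
      ((∀ i, Φ i Astar = 0) ∧
        ∀ B : ∀ m, 𝒜 m, (∀ i, Φ i B = 0) → f B ≤ f Astar) := by
  have hη : 0 < η := lt_of_le_of_lt (hf Astar).1 (hf Astar).2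
  -- For feasible A, U A = f A
  have hUfeas : ∀ A, (∀ i, Φ i A = 0) → U A = f A := by
    intro A hA
    rw [hU A, Finset.sum_congr rfl (fun i _ => hA i), Finset.sum_const_zero]
    ring
  -- For infeasible A, ∑ Φ i A ≤ -1
  have hsum : ∀ A, ¬(∀ i, Φ i A = 0) → ∑ i, Φ i A ≤ -1 := by
    intro A hA
    classical
    push_neg at hA
    obtain ⟨j, hj⟩ := hA
    have hjval : Φ j A = -1 := (hΦ j A).resolve_right hj
    have hsplit : ∑ i, Φ i A = Φ j A + ∑ i ∈ Finset.univ.erase j, Φ i A :=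
      (Finset.add_sum_erase _ _ (Finset.mem_univ j)).symm
    have hrest : ∑ i ∈ Finset.univ.erase j, Φ i A ≤ 0 :=
      Finset.sum_nonpos (fun i _ => by rcases hΦ i A with h | h <;> simp [h])
    rw [hsplit, hjval]; linarith
  obtain ⟨B0, hB0⟩ := hfeas
  have hUinfeas : ∀ A, ¬(∀ i, Φ i A = 0) → U A < 0 := by
    intro A hA
    have h1 : η * ∑ i, Φ i A ≤ η * (-1) :=
      mul_le_mul_of_nonneg_left (hsum A hA) hη.le
    rw [hU A]
    nlinarith [(hf A).2, (hf A).1]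
  constructor
  · intro hmax
    have hAstarFeas : ∀ i, Φ i Astar = 0 := by
      by_contra h
      have h1 := hmax B0
      rw [hUfeas B0 hB0] at h1
      exact absurd (lt_of_le_of_lt h1 (hUinfeas Astar h)) (not_lt.mpr (hf B0).1)
    refine ⟨hAstarFeas, fun B hB => ?_⟩
    have := hmax B
    rwa [hUfeas B hB, hUfeas Astar hAstarFeas] at this
  · rintro ⟨hfeasA, hopt⟩ A
    rw [hUfeas Astar hfeasA]
    by_cases hA : ∀ i, Φ i A = 0
    · rw [hUfeas A hA]; exact hopt A hA
    · exact le_of_lt (lt_of_lt_of_le (hUinfeas A hA) (hf Astar).1)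
end

section
/- (Uniqueness remark after Theorem 2.) Consider the joint sensing and communication game with common utility U(A) = f(A) + η·∑_{i∈ι} Φ_i(A). Assume 0 ≤ f(A) < η for every strategy profile A, and assume that at least one feasible profile exists. If the game has exactly one pure strategy Nash equilibrium A*, then A* is feasible, maximizes U over all strategy profiles, and maximizes f over all feasible profiles (it is the Pareto optimal solution of the time resource allocation problem). -/
/-- Uniqueness remark after Theorem 2. With `U(A) = f(A) + η·∑ i, Φ i A`,
`0 ≤ f(A) < η` for every profile, and at least one feasible profile, if the game has
exactly one pure strategy Nash equilibrium `A*`, then `A*` is feasible, maximizes `U`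
over all profiles, and maximizes `f` over all feasible profiles. -/
theorem stmt_8
    {ι : Type*} [Fintype ι] [Nonempty ι] [DecidableEq ι]
    {𝒜 : ι → Type*} [∀ m, Fintype (𝒜 m)] [∀ m, Nonempty (𝒜 m)]
    (f : (∀ m, 𝒜 m) → ℝ) (η : ℝ) (Φ : ι → (∀ m, 𝒜 m) → ℝ)
    (hΦ : ∀ i A, Φ i A = -1 ∨ Φ i A = 0)
    (U : (∀ m, 𝒜 m) → ℝ)
    (hU : ∀ A, U A = f A + η * ∑ i, Φ i A)
    (hf : ∀ A, 0 ≤ f A ∧ f A < η)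
    (hfeas : ∃ B : ∀ m, 𝒜 m, ∀ i, Φ i B = 0)
    (Astar : ∀ m, 𝒜 m)
    (hNE : ∀ (m : ι) (a : 𝒜 m), U (Function.update Astar m a) ≤ U Astar)
    (huniq : ∀ B : ∀ m, 𝒜 m,
      (∀ (m : ι) (a : 𝒜 m), U (Function.update B m a) ≤ U B) → B = Astar) :
    (∀ i, Φ i Astar = 0) ∧
    (∀ A : ∀ m, 𝒜 m, U A ≤ U Astar) ∧
    (∀ B : ∀ m, 𝒜 m, (∀ i, Φ i B = 0) → f B ≤ f Astar) := by
  have hη : 0 < η := lt_of_le_of_lt (hf Astar).1 (hf Astar).2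
  -- global maximizer of U exists
  obtain ⟨M, hM⟩ := Finite.exists_max U
  have hMA : M = Astar := huniq M (fun m a => hM _)
  have hmax : ∀ A, U A ≤ U Astar := hMA ▸ hM
  obtain ⟨B, hB⟩ := hfeas
  have hUB : U B = f B := by
    rw [hU]
    simp [hB]
  -- Astar is feasible
  have hfeasA : ∀ i, Φ i Astar = 0 := by
    by_contra h
    push_neg at h
    obtain ⟨j, hj⟩ := h
    have hj' : Φ j Astar = -1 := (hΦ j Astar).resolve_right hj
    have hsum : ∑ i, Φ i Astar ≤ -1 := by
      rw [← Finset.add_sum_erase _ _ (Finset.mem_univ j), hj']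
      have : ∑ i ∈ Finset.univ.erase j, Φ i Astar ≤ 0 :=
        Finset.sum_nonpos fun i _ => by rcases hΦ i Astar with h | h <;> simp [h]
      linarith
    have : U Astar ≤ f Astar - η := by
      rw [hU]
      have := mul_le_mul_of_nonneg_left hsum hη.le
      linarith
    have h1 : U Astar < 0 := lt_of_le_of_lt this (by linarith [(hf Astar).2])
    have h2 : 0 ≤ U B := hUB ▸ (hf B).1
    linarith [hmax B]
  have hUA : U Astar = f Astar := by rw [hU]; simp [hfeasA]
  refine ⟨hfeasA, hmax, fun C hC => ?_⟩
  have : U C = f C := by rw [hU]; simp [hC]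
  linarith [hmax C]
end

section
/- (Finite improvement property for finite exact potential games.) Let a finite strategic game with per-player utilities U_m admit an exact potential P. Then there is no infinite sequence of strategy profiles A⁰, A¹, A², … such that for every t there exist a player m and a strategy a ∈ 𝒜 m with A^{t+1} = A^t[m ↦ a] and U_m(A^{t+1}) > U_m(A^t); that is, every path of strictly improving unilateral deviations is finite. -/
/-- Finite improvement property for finite exact potential games.
If a finite strategic game with utilities `U m` admits an exact potential `P`, then
there is no infinite sequence of profiles in which each step is a strictly improving
unilateral deviation by some player. -/
theorem stmt_9
    {ι : Type*} [Fintype ι] [Nonempty ι] [DecidableEq ι]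
    {𝒜 : ι → Type*} [∀ m, Fintype (𝒜 m)] [∀ m, Nonempty (𝒜 m)]
    (U : ι → (∀ m, 𝒜 m) → ℝ)
    (P : (∀ m, 𝒜 m) → ℝ)
    (hP : ∀ (A : ∀ m, 𝒜 m) (m : ι) (a : 𝒜 m),
      U m (Function.update A m a) - U m A = P (Function.update A m a) - P A) :
    ¬ ∃ A : ℕ → ∀ m, 𝒜 m, ∀ t : ℕ, ∃ (m : ι) (a : 𝒜 m),
      A (t + 1) = Function.update (A t) m a ∧ U m (A t) < U m (A (t + 1)) := by
  rintro ⟨A, hA⟩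
  have hmono : StrictMono (fun t => P (A t)) := by
    apply strictMono_nat_of_lt_succ
    intro t
    obtain ⟨m, a, heq, hlt⟩ := hA t
    have := hP (A t) m a
    rw [← heq] at this
    linarith
  have hinj : Function.Injective A := fun s t hst => by
    have : P (A s) = P (A t) := by rw [hst]
    exact hmono.injective this
  obtain ⟨s, t, hne, he⟩ := Finite.exists_ne_map_eq_of_infinite A
  exact hne (hinj he)
end

section
/- (Theorem 3: convergence of the CTRA best-response dynamics.) Consider the joint sensing and communication game with common utility U(A) = f(A) + η·∑_{i∈ι} Φ_i(A). Assume (i) f(A) − f(B) < η for all strategy profiles A, B, and (ii) for every profile A and every player m with Φ_m(A) = −1 there exists a' ∈ 𝒜 m such that the deviation A' = A[m ↦ a'] satisfies Φ_m(A') = 0 and Φ_j(A') = Φ_j(A) for all j ≠ m. Let (A^t)_{t∈ℕ} be any sequence of strategy profiles such that for each t: if some player m has a strategy a ∈ 𝒜 m with U(A^t[m ↦ a]) > U(A^t), then A^{t+1} = A^t[m' ↦ a'] for some player m' and strategy a' with U(A^{t+1}) > U(A^t); and otherwise A^{t+1} = A^t. Then there exists T ∈ ℕ such that A^t = A^T for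 all t ≥ T, and the limit profile A^T is a feasible pure strategy Nash equilibrium of the game. -/
/-- Theorem 3: convergence of the CTRA best-response dynamics.
With `U(A) = f(A) + η·∑ i, Φ i A`, assume (i) `f(A) − f(B) < η` for all profiles, and
(ii) every player with a violated constraint can unilaterally repair it without affecting
the other players' penalties. Let `(A t)` be any sequence of profiles such that at each
step: if some player has a strictly improving unilateral deviation, then the next profile
is a strictly improving unilateral deviation by some player; otherwise the profile stays
put. Then the sequence is eventually constant, and its limit profile is a feasible pure
strategy Nash equilibrium. -/
theorem stmt_11
    {ι : Type*} [Fintype ι] [Nonempty ι] [DecidableEq ι]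
    {𝒜 : ι → Type*} [∀ m, Fintype (𝒜 m)] [∀ m, Nonempty (𝒜 m)]
    (f : (∀ m, 𝒜 m) → ℝ) (η : ℝ) (Φ : ι → (∀ m, 𝒜 m) → ℝ)
    (hΦ : ∀ i A, Φ i A = -1 ∨ Φ i A = 0)
    (U : (∀ m, 𝒜 m) → ℝ)
    (hU : ∀ A, U A = f A + η * ∑ i, Φ i A)
    (hf : ∀ A B, f A - f B < η)
    (hrepair : ∀ (A : ∀ m, 𝒜 m) (m : ι), Φ m A = -1 →
      ∃ a' : 𝒜 m, Φ m (Function.update A m a') = 0 ∧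
        ∀ j, j ≠ m → Φ j (Function.update A m a') = Φ j A)
    (A : ℕ → ∀ m, 𝒜 m)
    (hstep : ∀ t : ℕ,
      ((∃ (m : ι) (a : 𝒜 m), U (A t) < U (Function.update (A t) m a)) →
        ∃ (m' : ι) (a' : 𝒜 m'),
          A (t + 1) = Function.update (A t) m' a' ∧ U (A t) < U (A (t + 1))) ∧
      ((¬ ∃ (m : ι) (a : 𝒜 m), U (A t) < U (Function.update (A t) m a)) →
        A (t + 1) = A t)) :
    ∃ T : ℕ, (∀ t ≥ T, A t = A T) ∧
      (∀ i, Φ i (A T) = 0) ∧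
      (∀ (m : ι) (a : 𝒜 m), U (Function.update (A T) m a) ≤ U (A T)) := by

  -- Termination: not every time step can have an improving deviation
  by_cases hall : ∀ t, ∃ (m : ι) (a : 𝒜 m), U (A t) < U (Function.update (A t) m a)
  · exfalso
    have hlt : ∀ t, U (A t) < U (A (t + 1)) := by
      intro t
      obtain ⟨m', a', _, h⟩ := (hstep t).1 (hall t)
      exact h
    have hmono : StrictMono (fun t => U (A t)) := strictMono_nat_of_lt_succ hlt
    have hinj : Function.Injective A := by
      intro s t hst
      by_contra hne
      rcases lt_or_gt_of_ne hne with h | h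
      · exact absurd (congrArg U hst) (ne_of_lt (hmono h))
      · exact absurd (congrArg U hst) (ne_of_gt (hmono h))
    exact (Finite.exists_ne_map_eq_of_infinite A).elim
      (fun x hx => hx.choose_spec.1 (hinj hx.choose_spec.2))
  · push_neg at hall
    obtain ⟨T, hT⟩ := hall
    refine ⟨T, ?_, ?_, hT⟩
    · intro t ht
      induction t, ht using Nat.le_induction with
      | base => rfl
      | succ n hn ih =>
        have : A (n + 1) = A n := by
          apply (hstep n).2
          rintro ⟨m, a, hma⟩
          rw [ih] at hma
          exact absurd hma (not_lt.2 (hT m a))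
        rw [this, ih]
    · intro i
      rcases hΦ i (A T) with hi | hi
      · exfalso
        obtain ⟨a', ha0, hrest⟩ := hrepair (A T) i hi
        set A' := Function.update (A T) i a' with hA'
        have hsum : ∑ j, Φ j A' = (∑ j, Φ j (A T)) + 1 := by
          rw [← Finset.sum_erase_add _ _ (Finset.mem_univ i),
              ← Finset.sum_erase_add _ _ (Finset.mem_univ i)]
          have : ∑ j ∈ Finset.univ.erase i, Φ j A'
              = ∑ j ∈ Finset.univ.erase i, Φ j (A T) :=
            Finset.sum_congr rfl fun j hj => hrest j (Finset.ne_of_mem_erase hj)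
          rw [this, ha0, hi]; ring
        have hη : 0 < η := sub_self (f (A T)) ▸ hf (A T) (A T)
        have : U (A T) < U A' := by
          rw [hU, hU, hsum]
          have := hf (A T) A'
          nlinarith
        exact absurd this (not_lt.2 (hT i a'))
      · exact hi
end
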